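/- Huet's lemma: a terminating transition system is confluent modulo an equivalence ∼ if and only if it is locally confluent modulo ∼. That is, if → is a binary relation on a set A whose converse is well-founded, and ∼ is an equivalence relation on A, then → is confluent modulo ∼ (whenever s₁ *← s₀ ∼ s₀' →* s₂, the states s₁ and s₂ are joinable modulo ∼) if and only if → is locally confluent modulo ∼ (every α-corner s₁ ← s₀ → s₂ and every β-corner s₁ ∼ s₀ → s₂ has s₁ and s₂ joinable modulo ∼). -/

import Mathlib

/-!
Instead of confluence one proves, by well-founded induction on `x`, that `a ∼ y *← x →* z ∼ b`
always makes `a` and `b` joinable modulo `∼`. When both sides leave `x`, an α-corner at `x` and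
the induction hypothesis at the two successors of `x` close the diagram; when one side stays at
`x`, a β-corner and the induction hypothesis at the other successor do. Confluence modulo `∼`
follows by applying this statement at `s₀'` and then at `s₀`.
-/

namespace Relation

variable {α : Type*} {r e : α → α → Prop}

def JoinModulo (r e : α → α → Prop) (a b : α) : Prop :=
  ∃ u v, ReflTransGen r a u ∧ ReflTransGen r b v ∧ e u v

theorem JoinModulo.of_rel {a b : α} (h : e a b) : JoinModulo r e a b :=
  ⟨a, b, .refl, .refl, h⟩

theorem JoinModulo.symm (he : Std.Symm e) {a b : α} (h : JoinModulo r e a b) :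
    JoinModulo r e b a :=
  let ⟨u, v, hau, hbv, huv⟩ := h
  ⟨v, u, hbv, hau, he.symm u v huv⟩

theorem joinModulo_of_equiv_reachable (he : Equivalence e)
    (hwf : WellFounded fun s t => r t s)
    (hα : ∀ s₀ s₁ s₂, r s₀ s₁ → r s₀ s₂ → JoinModulo r e s₁ s₂)
    (hβ : ∀ s₀ s₁ s₂, e s₁ s₀ → r s₀ s₂ → JoinModulo r e s₁ s₂) (x : α) :
    ∀ y z, ReflTransGen r x y → ReflTransGen r x z → ∀ a b, e a y → e b z →
      JoinModulo r e a b := by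
  induction x using hwf.induction with
  | _ x ih =>
  have cliff : ∀ y a b, ReflTransGen r x y → e a y → e b x → JoinModulo r e a b := by
    intro y a b hxy hay hbx
    rcases hxy.cases_head with rfl | ⟨y₁, hxy₁, hy₁y⟩
    · exact .of_rel (he.trans hay (he.symm hbx))
    obtain ⟨u, v, hbu, hy₁v, huv⟩ := hβ x b y₁ hbx hxy₁
    obtain ⟨a', u', haa', huu', ha'u'⟩ := ih y₁ hxy₁ y v hy₁y hy₁v a u hay huv
    exact ⟨a', u', haa', hbu.trans huu', ha'u'⟩
  intro y z hxy hxz a b hay hbz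
  rcases hxz.cases_head with rfl | ⟨z₁, hxz₁, hz₁z⟩
  · exact cliff y a b hxy hay hbz
  rcases hxy.cases_head with rfl | ⟨y₁, hxy₁, hy₁y⟩
  · exact (cliff z b a (.head hxz₁ hz₁z) hbz hay).symm he.stdSymm
  obtain ⟨u, v, hy₁u, hz₁v, huv⟩ := hα x y₁ z₁ hxy₁ hxz₁
  obtain ⟨a', v', haa', hvv', ha'v'⟩ := ih y₁ hxy₁ y u hy₁y hy₁u a v hay (he.symm huv)
  obtain ⟨a'', b', ha'a'', hbb', ha''b'⟩ :=
    ih z₁ hxz₁ v' z (hz₁v.trans hvv') hz₁z a' b ha'v' hbz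
  exact ⟨a'', b', haa'.trans ha'a'', hbb', ha''b'⟩

end Relation

/-- Huet's lemma: a terminating transition system is confluent modulo an
equivalence `e` if and only if it is locally confluent modulo `e`
(all α-corners and β-corners are joinable modulo `e`). -/
theorem huet_lemma {A : Type*} (r : A → A → Prop) (e : A → A → Prop)
    (hequiv : Equivalence e)
    (hterm : WellFounded (fun s t => r t s)) :
    (∀ s₀ s₀' s₁ s₂ : A, Relation.ReflTransGen r s₀ s₁ → e s₀ s₀' →
        Relation.ReflTransGen r s₀' s₂ →
        ∃ u₁ u₂ : A, Relation.ReflTransGen r s₁ u₁ ∧ Relation.ReflTransGen r s₂ u₂ ∧ e u₁ u₂) ↔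
    ((∀ s₀ s₁ s₂ : A, r s₀ s₁ → r s₀ s₂ →
        ∃ u₁ u₂ : A, Relation.ReflTransGen r s₁ u₁ ∧ Relation.ReflTransGen r s₂ u₂ ∧ e u₁ u₂) ∧
     (∀ s₀ s₁ s₂ : A, e s₁ s₀ → r s₀ s₂ →
        ∃ u₁ u₂ : A, Relation.ReflTransGen r s₁ u₁ ∧ Relation.ReflTransGen r s₂ u₂ ∧ e u₁ u₂)) := by
  constructor
  · intro hconf
    exact ⟨fun s₀ s₁ s₂ h₁ h₂ => hconf s₀ s₀ s₁ s₂ (.single h₁) (hequiv.refl s₀) (.single h₂),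
      fun s₀ s₁ s₂ he hr => hconf s₁ s₀ s₁ s₂ .refl he (.single hr)⟩
  · rintro ⟨hα, hβ⟩ s₀ s₀' s₁ s₂ h₀₁ h₀₀' h₀'₂
    have join := Relation.joinModulo_of_equiv_reachable hequiv hterm hα hβ
    obtain ⟨p, q, h₀p, h₂q, hpq⟩ := join s₀' s₀' s₂ .refl h₀'₂ s₀ s₂ h₀₀' (hequiv.refl s₂)
    obtain ⟨u, v, h₁u, hqv, huv⟩ := join s₀ s₁ p h₀₁ h₀p s₁ q (hequiv.refl s₁) (hequiv.symm hpq)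
    exact ⟨u, v, h₁u, h₂q.trans hqv, huv⟩
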